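/- The production term of the rate matrix: Let C be an adhesive category in which every composable pair of monomorphisms has an FPBC. Fix a rule α : L ⇀ R and objects F and G. Let M_R be a complete set of representatives of the isomorphism classes of minimal gluings of R and F, assumed finite, and let RMG ⊆ M_R be the set of those μ = (μ₁ : R ⟶ μ̂, μ₂ : F ⟶ μ̂) whose first leg μ₁ is derivable by α. For each μ ∈ RMG fix a derivation μ₁ ⇒[α†] d_μ with comatch d_μ : L ⟶ S_μ, and for each match f ∈ mchs(L, G) fix a derivation f ⇒[α] α(f) with comatch α(f) : R ⟶ H_f. Assume mchs(L, G), each mchs(F, H_f), and each mchs(S_μ, G) are finite. Then Σ_{f ∈ mchs(L, G)} |mchs(F, H_f)| = Σ_{μ ∈ RMG} |mchs(S_μ, G)|. -/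

import Mathlib

open CategoryTheory Limits

universe v u

variable {C : Type u} [Category.{v} C]

/-- `IsFPBC f₁ f₂ g₁ g₂` states that `(g₁ : X ⟶ W, g₂ : W ⟶ Z)` is a final pullback
complement of the composable pair `(f₁ : X ⟶ Y, f₂ : Y ⟶ Z)`. -/
structure IsFPBC {X Y Z W : C} (f₁ : X ⟶ Y) (f₂ : Y ⟶ Z) (g₁ : X ⟶ W) (g₂ : W ⟶ Z) :
    Prop where
  isPullback : IsPullback f₁ g₁ f₂ g₂
  final : ∀ {P Q : C} (f₁' : P ⟶ Y) (g₁' : P ⟶ Q) (g₂' : Q ⟶ Z),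
      IsPullback f₁' g₁' f₂ g₂' → ∀ p : P ⟶ X, p ≫ f₁ = f₁' →
      ∃! u : Q ⟶ W, u ≫ g₂ = g₂' ∧ g₁' ≫ u = p ≫ g₁

/-- A rule `L ⇀ R` is a span of monomorphisms. -/
structure Rule (L R : C) where
  K : C
  left : K ⟶ L
  right : K ⟶ R
  mono_left : Mono left
  mono_right : Mono right

/-- The reverse `α† : R ⇀ L` of a rule `α : L ⇀ R`. -/
def Rule.rev {L R : C} (α : Rule L R) : Rule R L :=
  ⟨α.K, α.right, α.left, α.mono_right, α.mono_left⟩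

/-- `IsDerivation α f g β`: the comatch `g : R ⟶ H` is derived from the match `f : L ⟶ G`
by the rule `α : L ⇀ R`, with corule `β : G ⇀ H`. -/
def IsDerivation {L R G H : C} (α : Rule L R) (f : L ⟶ G) (g : R ⟶ H) (β : Rule G H) :
    Prop :=
  ∃ h : α.K ⟶ β.K, Mono h ∧ IsFPBC α.left f h β.left ∧ IsPushout α.right h g β.right

/-- A match `g : R ⟶ H` is derivable by a rule `α : L ⇀ R` if `f ⇒[α] g` for some match `f`. -/
def Derivable {L R H : C} (α : Rule L R) (g : R ⟶ H) : Prop :=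
  ∃ (G : C) (f : L ⟶ G) (β : Rule G H), Mono f ∧ IsDerivation α f g β

/-- A gluing of `G₁` and `G₂`: a cospan of monomorphisms. -/
structure Gluing (G₁ G₂ : C) where
  U : C
  i₁ : G₁ ⟶ U
  i₂ : G₂ ⟶ U
  mono₁ : Mono i₁
  mono₂ : Mono i₂

/-- A gluing is minimal if every monomorphism through which both legs factor is an iso. -/
def Gluing.Minimal {G₁ G₂ : C} (gl : Gluing G₁ G₂) : Prop :=
  ∀ (V : C) (m : V ⟶ gl.U), Mono m →
    (∃ j₁ : G₁ ⟶ V, j₁ ≫ m = gl.i₁) → (∃ j₂ : G₂ ⟶ V, j₂ ≫ m = gl.i₂) → IsIso m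

/-- Two gluings are isomorphic if there is an isomorphism of their tips commuting
with the legs. -/
def GluingIso {G₁ G₂ : C} (g h : Gluing G₁ G₂) : Prop :=
  ∃ u : g.U ≅ h.U, g.i₁ ≫ u.hom = h.i₁ ∧ g.i₂ ≫ u.hom = h.i₂

/-- The set (type) of matches (monomorphisms) from `A` to `B`. -/
abbrev Mchs (A B : C) := {f : A ⟶ B // Mono f}

/-!
Both sides count the triples `(f, μ, c)` of a match `f : L ⟶ G`, a representative minimal gluing
`μ` and a match `c : μ̂ ⟶ H_f` with `μ₁ ≫ c = α(f)`.

For fixed `f`, `(μ, c) ↦ μ₂ ≫ c` is a bijection onto `mchs(F, H_f)`: a match `m : F ⟶ H_f` and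
`α(f)` generate their union, a minimal gluing (adhesive categories have unions), isomorphic to
exactly one `μ`.

For fixed `μ`, such `c` exist only if `μ₁` is derivable (restrict the derivation of `α(f)` along
`c`), and then they correspond to the matches `n : S_μ ⟶ G` with `d_μ ≫ n = f`: `n` and `c` are
the outer components of a morphism from the span `S_μ ← D_μ → μ̂` to the corule `G ← D_f → H_f`.
Its middle component is determined by `n` through the FPBC `D_f`, and by `c` through the
uniqueness of FPBCs, once the pushout of `α(f)` is restricted along `c`.
-/

theorem Relator.nonempty_equiv_of_biTotal_of_biUnique {α β : Type*} {r : α → β → Prop}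
    (ht : Relator.BiTotal r) (hu : Relator.BiUnique r) : Nonempty (α ≃ β) := by
  choose φ hφ using ht.1
  exact ⟨Equiv.ofBijective φ ⟨fun a a' h => hu.1 (hφ a) (h ▸ hφ a'),
    fun b => (ht.2 b).imp fun a ha => hu.2 (hφ a) ha⟩⟩

theorem CategoryTheory.IsPullback.comp_mono {P X Y Z T : C} {p : P ⟶ X} {q : P ⟶ Y}
    {f : X ⟶ Z} {g : Y ⟶ Z} (H : IsPullback p q f g) (n : Z ⟶ T) [Mono n] :
    IsPullback p q (f ≫ n) (g ≫ n) := by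
  simpa using H.paste_vert (IsPullback.of_vert_isIso_mono (fst := g) (snd := 𝟙 Y) ⟨by simp⟩)

theorem CategoryTheory.IsPullback.of_comp_mono_snd {P X Y Y' Z : C} {p : P ⟶ X} {k : P ⟶ Y'}
    {q : Y' ⟶ Y} {f : X ⟶ Z} {g : Y ⟶ Z} [Mono q] (H : IsPullback p (k ≫ q) f g) :
    IsPullback p k f (q ≫ g) := by
  refine IsPullback.of_isLimit' ⟨by rw [H.w, Category.assoc]⟩ <|
    PullbackCone.IsLimit.mk _ (fun s => H.lift s.fst (s.snd ≫ q) (by simp [s.condition]))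
      (fun s => by simp) (fun s => ?_) (fun s m h₁ h₂ => H.hom_ext ?_ ?_)
  · simp [← cancel_mono q]
  · simpa using h₁
  · simp [← h₂]

section FPBC

variable {X Y Z W W' : C} {f₁ : X ⟶ Y} {f₂ : Y ⟶ Z} {g₁ : X ⟶ W} {g₂ : W ⟶ Z}

theorem IsFPBC.endo_eq_id (H : IsFPBC f₁ f₂ g₁ g₂) {e : W ⟶ W} (h₁ : g₁ ≫ e = g₁)
    (h₂ : e ≫ g₂ = g₂) : e = 𝟙 W :=
  (H.final f₁ g₁ g₂ H.isPullback (𝟙 X) (Category.id_comp _)).unique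
    ⟨h₂, by rw [h₁, Category.id_comp]⟩ ⟨Category.id_comp _, by simp⟩

theorem IsFPBC.exists_iso {k₁ : X ⟶ W'} {k₂ : W' ⟶ Z} (H : IsFPBC f₁ f₂ g₁ g₂)
    (H' : IsFPBC f₁ f₂ k₁ k₂) : ∃ w : W ≅ W', g₁ ≫ w.hom = k₁ ∧ w.hom ≫ k₂ = g₂ := by
  obtain ⟨u, ⟨hu₂, hu₁⟩, -⟩ := H'.final f₁ g₁ g₂ H.isPullback (𝟙 X) (Category.id_comp _)
  obtain ⟨v, ⟨hv₂, hv₁⟩, -⟩ := H.final f₁ k₁ k₂ H'.isPullback (𝟙 X) (Category.id_comp _)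
  rw [Category.id_comp] at hu₁ hv₁
  refine ⟨⟨u, v, H.endo_eq_id ?_ ?_, H'.endo_eq_id ?_ ?_⟩, hu₁, hu₂⟩ <;>
    simp only [Category.assoc, reassoc_of% hu₁, reassoc_of% hv₁, hu₁, hv₁, hu₂, hv₂]

end FPBC

section Adhesive

variable [Adhesive C]

/-- Pulling the pushout back along the competitor's leg `g₂'` gives, by van Kampen, a pushout
whose universal property provides the factorisation. -/
theorem CategoryTheory.IsPushout.isFPBC {X Y Z W : C} {a : X ⟶ Y} {b : X ⟶ W} {c : Y ⟶ Z}
    {d : W ⟶ Z} (H : IsPushout a b c d) [Mono a] : IsFPBC a c b d := by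
  refine ⟨Adhesive.isPullback_of_isPushout_of_mono_left H, ?_⟩
  intro P Q f₁' g₁' g₂' hpb p hp
  have : Mono d := Adhesive.mono_of_isPushout_of_mono_left H
  have hd := IsPullback.of_hasPullback d g₂'
  have : HasPullback f₁' a := hasPullback_symmetry a f₁'
  obtain ⟨P', s, t, q, back₁, back₂, top⟩ :=
    (Adhesive.van_kampen H).exists_cube_filling hpb.flip hd.flip
  have hs : s ≫ p = q := by rw [← cancel_mono a, Category.assoc, hp, back₁.w]
  refine ⟨top.desc (p ≫ b) (pullback.fst d g₂') ?_, ⟨?_, top.inl_desc _ _ _⟩, ?_⟩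
  · rw [reassoc_of% hs, back₂.w]
  · refine top.hom_ext ?_ ?_
    · rw [top.inl_desc_assoc, Category.assoc, ← H.w, reassoc_of% hp, hpb.w]
    · rw [top.inr_desc_assoc, hd.w]
  · rintro u ⟨h₁, h₂⟩
    refine top.hom_ext ?_ ?_
    · rw [top.inl_desc, h₂]
    · rw [top.inr_desc, ← cancel_mono d, Category.assoc, h₁, hd.w]

theorem IsFPBC.isPushout {X Y Z W W' : C} {a : X ⟶ Y} {b : X ⟶ W} {c : Y ⟶ Z} {d : W ⟶ Z}
    {b' : X ⟶ W'} {d' : W' ⟶ Z} (H : IsPushout a b c d) [Mono a] (H' : IsFPBC a c b' d') :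
    IsPushout a b' c d' := by
  obtain ⟨w, hb, hd⟩ := H.isFPBC.exists_iso H'
  exact H.of_iso (Iso.refl _) (Iso.refl _) w (Iso.refl _) (by simp) (by simp [hb])
    (by simp) (by simp [← hd])

/-- Lack–Sobociński, Theorem 5.1: adhesive categories have unions of subobjects. -/
theorem CategoryTheory.IsPushout.mono_desc {W X Y Z T : C} {a : W ⟶ X} {b : W ⟶ Y}
    {c : X ⟶ Z} {d : Y ⟶ Z} (H : IsPushout a b c d) {t₁ : X ⟶ T} {t₂ : Y ⟶ T} [Mono t₁]
    [Mono t₂] (hpb : IsPullback a b t₁ t₂) : Mono (H.desc t₁ t₂ hpb.w) := by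
  have H' : IsPushout (pullback.fst t₁ t₂) (pullback.snd t₁ t₂) c d :=
    H.of_iso hpb.isoPullback (Iso.refl _) (Iso.refl _) (Iso.refl _) (by simp) (by simp)
      (by simp) (by simp)
  have : H.desc t₁ t₂ hpb.w = H'.isoPushout.hom ≫ pushout.desc t₁ t₂ pullback.condition :=
    H.hom_ext (by rw [H.inl_desc, H'.inl_isoPushout_hom_assoc, pushout.inl_desc])
      (by rw [H.inr_desc, H'.inr_isoPushout_hom_assoc, pushout.inr_desc])
  rw [this]
  infer_instance

/-- `D` is the pullback of `e` along `c`; by van Kampen the restricted square is a pushout. -/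
theorem CategoryTheory.IsPushout.exists_restrict {K R E U Z : C} {r : K ⟶ R} {h : K ⟶ E}
    {g : R ⟶ Z} {e : E ⟶ Z} (H : IsPushout r h g e) [Mono r] {i : R ⟶ U}
    {c : U ⟶ Z} [Mono c] (hc : i ≫ c = g) :
    ∃ (D : C) (k : K ⟶ D) (q : D ⟶ E) (e' : D ⟶ U),
      k ≫ q = h ∧ e' ≫ c = q ≫ e ∧ IsPushout r k i e' := by
  have pb := IsPullback.of_hasPullback c e
  have hk : (r ≫ i) ≫ c = h ≫ e := by rw [Category.assoc, hc, H.w]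
  refine ⟨_, pb.lift _ _ hk, pullback.snd c e, pullback.fst c e, pb.lift_snd _ _ _,
    pb.w, ?_⟩
  refine (Adhesive.van_kampen H _ _ _ _ (𝟙 K) (𝟙 R) _ c IsPullback.of_id_snd
    (IsPullback.of_vert_isIso_mono ⟨by simp⟩) ⟨by simp [hc]⟩ ⟨pb.w⟩ ⟨by simp⟩).mpr
    ⟨IsPullback.of_vert_isIso_mono ⟨by simp [hc]⟩, pb⟩

end Adhesive

section Union

variable [Adhesive C] {X Y T : C} (t₁ : X ⟶ T) (t₂ : Y ⟶ T) [Mono t₁] [Mono t₂]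

/-- The union of the subobjects `t₁` and `t₂` of `T`: their pushout over their intersection. -/
noncomputable def Gluing.union : Gluing X Y where
  U := pushout (pullback.fst t₁ t₂) (pullback.snd t₁ t₂)
  i₁ := pushout.inl _ _
  i₂ := pushout.inr _ _
  mono₁ := Adhesive.mono_of_isPushout_of_mono_right (IsPushout.of_hasPushout _ _)
  mono₂ := Adhesive.mono_of_isPushout_of_mono_left (IsPushout.of_hasPushout _ _)

noncomputable def Gluing.unionι : (Gluing.union t₁ t₂).U ⟶ T :=
  pushout.desc t₁ t₂ pullback.condition

instance : Mono (Gluing.unionι t₁ t₂) :=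
  Adhesive.desc_mono_of_mono

@[simp]
theorem Gluing.union_i₁_unionι : (Gluing.union t₁ t₂).i₁ ≫ Gluing.unionι t₁ t₂ = t₁ :=
  pushout.inl_desc _ _ _

@[simp]
theorem Gluing.union_i₂_unionι : (Gluing.union t₁ t₂).i₂ ≫ Gluing.unionι t₁ t₂ = t₂ :=
  pushout.inr_desc _ _ _

theorem Gluing.union_hom_ext {Z : C} {u u' : (Gluing.union t₁ t₂).U ⟶ Z}
    (h₁ : (Gluing.union t₁ t₂).i₁ ≫ u = (Gluing.union t₁ t₂).i₁ ≫ u')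
    (h₂ : (Gluing.union t₁ t₂).i₂ ≫ u = (Gluing.union t₁ t₂).i₂ ≫ u') : u = u' :=
  pushout.hom_ext h₁ h₂

theorem Gluing.exists_mono_union_lift {V : C} (m : V ⟶ T) [Mono m] (j₁ : X ⟶ V) (j₂ : Y ⟶ V)
    (h₁ : j₁ ≫ m = t₁) (h₂ : j₂ ≫ m = t₂) :
    ∃ w : (Gluing.union t₁ t₂).U ⟶ V,
      Mono w ∧ (Gluing.union t₁ t₂).i₁ ≫ w = j₁ ∧ (Gluing.union t₁ t₂).i₂ ≫ w = j₂ := by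
  have hw : pullback.fst t₁ t₂ ≫ j₁ = pullback.snd t₁ t₂ ≫ j₂ := by
    simp [← cancel_mono m, h₁, h₂, pullback.condition]
  refine ⟨pushout.desc j₁ j₂ hw, mono_of_mono_fac (?_ : _ ≫ m = Gluing.unionι t₁ t₂),
    pushout.inl_desc _ _ _, pushout.inr_desc _ _ _⟩
  exact Gluing.union_hom_ext t₁ t₂ ((pushout.inl_desc_assoc _ _ _ _).trans (by simp [h₁]))
    ((pushout.inr_desc_assoc _ _ _ _).trans (by simp [h₂]))

theorem Gluing.union_minimal : (Gluing.union t₁ t₂).Minimal := by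
  rintro V m hm ⟨j₁, hj₁⟩ ⟨j₂, hj₂⟩
  have hw : pullback.fst t₁ t₂ ≫ j₁ = pullback.snd t₁ t₂ ≫ j₂ := by
    rw [← cancel_mono m, Category.assoc, Category.assoc, hj₁, hj₂]
    exact pushout.condition
  have : IsSplitEpi m := ⟨⟨pushout.desc j₁ j₂ hw,
    Gluing.union_hom_ext t₁ t₂
      ((pushout.inl_desc_assoc _ _ _ _).trans (by rw [hj₁, Category.comp_id]))
      ((pushout.inr_desc_assoc _ _ _ _).trans (by rw [hj₂, Category.comp_id]))⟩⟩
  exact isIso_of_mono_of_isSplitEpi m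

theorem Gluing.Minimal.gluingIso_union {gl : Gluing X Y} (hgl : gl.Minimal) (c : gl.U ⟶ T)
    [Mono c] (h₁ : gl.i₁ ≫ c = t₁) (h₂ : gl.i₂ ≫ c = t₂) : GluingIso (Gluing.union t₁ t₂) gl := by
  obtain ⟨w, hw, hw₁, hw₂⟩ := Gluing.exists_mono_union_lift t₁ t₂ c gl.i₁ gl.i₂ h₁ h₂
  have : IsIso w := hgl _ w hw ⟨_, hw₁⟩ ⟨_, hw₂⟩
  exact ⟨asIso w, hw₁, hw₂⟩

end Union

theorem Gluing.Minimal.hom_ext [Adhesive C] {X Y Z : C} {gl : Gluing X Y} (hgl : gl.Minimal)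
    {u u' : gl.U ⟶ Z} (h₁ : gl.i₁ ≫ u = gl.i₁ ≫ u') (h₂ : gl.i₂ ≫ u = gl.i₂ ≫ u') : u = u' := by
  have := gl.mono₁
  have := gl.mono₂
  obtain ⟨w, hw₁, hw₂⟩ :=
    hgl.gluingIso_union gl.i₁ gl.i₂ (𝟙 _) (Category.comp_id _) (Category.comp_id _)
  rw [← cancel_epi w.hom]
  exact Gluing.union_hom_ext _ _ (by simp [reassoc_of% hw₁, h₁]) (by simp [reassoc_of% hw₂, h₂])

abbrev MchsUnder {R U H : C} (i : R ⟶ U) (r : R ⟶ H) : Type v :=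
  {c : U ⟶ H // Mono c ∧ i ≫ c = r}

section Classification

variable [Adhesive C] {ι : Type*} {R F H : C} (M : ι → Gluing R F) (r : R ⟶ H) [Mono r]

/-- Every match `F ⟶ H` glues with `r` to a minimal gluing, isomorphic to exactly one `M i`. -/
noncomputable def Gluing.sigmaMchsUnderEquiv (hmin : ∀ i, (M i).Minimal)
    (hrep : ∀ gl : Gluing R F, gl.Minimal → ∃! i, GluingIso gl (M i)) :
    (Σ i, MchsUnder (M i).i₁ r) ≃ Mchs F H := by
  refine Equiv.ofBijective (fun p => ⟨(M p.1).i₂ ≫ p.2.1, mono_comp' (M p.1).mono₂ p.2.2.1⟩)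
    ⟨?_, ?_⟩
  · rintro ⟨i, c, hc, hci⟩ ⟨i', c', hc', hci'⟩ h
    replace h : (M i).i₂ ≫ c = (M i').i₂ ≫ c' := congrArg Subtype.val h
    have := (M i).mono₂
    obtain rfl : i = i' := (hrep _ (Gluing.union_minimal r ((M i).i₂ ≫ c))).unique
      ((hmin i).gluingIso_union _ _ c hci rfl) ((hmin i').gluingIso_union _ _ c' hci' h.symm)
    obtain rfl : c = c' := (hmin i).hom_ext (hci.trans hci'.symm) h
    rfl
  · rintro ⟨m, hm⟩
    obtain ⟨i, ⟨u, hu₁, hu₂⟩, -⟩ := hrep _ (Gluing.union_minimal r m)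
    refine ⟨⟨i, u.inv ≫ Gluing.unionι r m, mono_comp _ _, ?_⟩, Subtype.ext ?_⟩
    · simp [← hu₁]
    · simp [← hu₂]

variable [Finite (Mchs F H)]

theorem Gluing.finite_mchsUnder (hmin : ∀ i, (M i).Minimal)
    (hrep : ∀ gl : Gluing R F, gl.Minimal → ∃! i, GluingIso gl (M i)) (i : ι) :
    Finite (MchsUnder (M i).i₁ r) :=
  have : Finite (Σ j, MchsUnder (M j).i₁ r) :=
    .of_equiv _ (Gluing.sigmaMchsUnderEquiv M r hmin hrep).symm
  .of_injective _ (sigma_mk_injective (β := fun j => MchsUnder (M j).i₁ r) (i := i))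

theorem Gluing.card_mchs_eq_sum [Fintype ι] (hmin : ∀ i, (M i).Minimal)
    (hrep : ∀ gl : Gluing R F, gl.Minimal → ∃! i, GluingIso gl (M i)) :
    Nat.card (Mchs F H) = ∑ i, Nat.card (MchsUnder (M i).i₁ r) :=
  have (i : ι) := Gluing.finite_mchsUnder M r hmin hrep i
  (Nat.card_congr (Gluing.sigmaMchsUnderEquiv M r hmin hrep)).symm.trans Nat.card_sigma

end Classification

section Derivation

variable {L R U S G H : C} {α : Rule L R}

/-- `(n, c)` are the outer components of a morphism of spans `γ.rev ⟶ β` whose middle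
component `u` satisfies `k ≫ u = h`. -/
def IsSpanHomUnder {K : C} (γ : Rule U S) (β : Rule G H) (k : K ⟶ γ.K) (h : K ⟶ β.K)
    (n : S ⟶ G) (c : U ⟶ H) : Prop :=
  ∃ u : γ.K ⟶ β.K, k ≫ u = h ∧ u ≫ β.left = γ.right ≫ n ∧ γ.left ≫ c = u ≫ β.right

variable {γ : Rule U S} {β : Rule G H} {k : α.K ⟶ γ.K} {h : α.K ⟶ β.K} {dS : L ⟶ S}
  {i : R ⟶ U} {f : L ⟶ G} {g : R ⟶ H}

theorem IsSpanHomUnder.match_unique (hS : IsPushout α.left k dS γ.right) {n n' : S ⟶ G}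
    (hn : dS ≫ n = dS ≫ n') {c : U ⟶ H} (h₁ : IsSpanHomUnder γ β k h n c)
    (h₂ : IsSpanHomUnder γ β k h n' c) : n = n' := by
  obtain ⟨u, -, hu₁, hu₂⟩ := h₁
  obtain ⟨u', -, hu₁', hu₂'⟩ := h₂
  have := β.mono_right
  obtain rfl : u = u' := by rw [← cancel_mono β.right, ← hu₂, ← hu₂']
  exact hS.hom_ext hn (hu₁.symm.trans hu₁')

variable [Adhesive C]

theorem Derivable.isPushout_of_isFPBC (hder : Derivable α i) {D : C}
    {k : α.K ⟶ D} {e : D ⟶ U} (hF : IsFPBC α.right i k e) : IsPushout α.right k i e := by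
  obtain ⟨_, _, _, -, _, _, -, hPO⟩ := hder
  have := α.mono_right
  exact hF.isPushout hPO

theorem IsDerivation.derivable_of_comp_mono (hder : IsDerivation α f g β) {c : U ⟶ H} [Mono c]
    (hc : i ≫ c = g) : Derivable α i := by
  obtain ⟨_, _, -, hPO⟩ := hder
  have := α.mono_left
  have := α.mono_right
  obtain ⟨D, k, q, e, hk, -, hres⟩ := hPO.exists_restrict hc
  have : Mono k := mono_of_mono_fac hk
  have po := IsPushout.of_hasPushout α.left k
  exact ⟨_, pushout.inl α.left k,
    ⟨D, pushout.inr α.left k, e, Adhesive.mono_of_isPushout_of_mono_left po,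
      Adhesive.mono_of_isPushout_of_mono_left hres⟩,
    Adhesive.mono_of_isPushout_of_mono_right po, k, this, po.isFPBC, hres⟩

theorem IsFPBC.existsUnique_of_isPushout (hG : IsFPBC α.left f h β.left)
    (hS : IsPushout α.left k dS γ.right) {n : S ⟶ G} [Mono n] (hn : dS ≫ n = f) :
    ∃! u : γ.K ⟶ β.K, u ≫ β.left = γ.right ≫ n ∧ k ≫ u = h := by
  have := α.mono_left
  have hpb : IsPullback α.left k f (γ.right ≫ n) := by
    rw [← hn]
    exact (Adhesive.isPullback_of_isPushout_of_mono_left hS).comp_mono n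
  simpa using hG.final α.left k (γ.right ≫ n) hpb (𝟙 _) (Category.id_comp _)

theorem exists_isSpanHomUnder_of_match (hS : IsPushout α.left k dS γ.right)
    (hU : IsPushout α.right k i γ.left) (hG : IsFPBC α.left f h β.left)
    (hH : IsPushout α.right h g β.right) {n : S ⟶ G} [Mono n] (hn : dS ≫ n = f) :
    ∃ c, Mono c ∧ i ≫ c = g ∧ IsSpanHomUnder γ β k h n c := by
  obtain ⟨u, ⟨hu₁, hu₂⟩, -⟩ := hG.existsUnique_of_isPushout hS hn
  have := γ.mono_right
  have : Mono u := mono_of_mono_fac hu₁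
  have hw : α.right ≫ g = k ≫ u ≫ β.right := by rw [reassoc_of% hu₂, hH.w]
  have hbot := IsPushout.of_top' (by rwa [hu₂]) hU
  refine ⟨hU.desc g (u ≫ β.right) hw, Adhesive.mono_of_isPushout_of_mono_right hbot,
    hU.inl_desc _ _ _, u, hu₂, hu₁, hU.inr_desc _ _ _⟩

theorem exists_isSpanHomUnder_of_comatch (hS : IsPushout α.left k dS γ.right)
    (hF : IsFPBC α.right i k γ.left) (hG : IsFPBC α.left f h β.left)
    (hH : IsPushout α.right h g β.right) [Mono f] {c : U ⟶ H} [Mono c] (hc : i ≫ c = g) :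
    ∃ n, Mono n ∧ dS ≫ n = f ∧ IsSpanHomUnder γ β k h n c := by
  have := α.mono_left
  have := α.mono_right
  have := γ.mono_left
  have := β.mono_left
  obtain ⟨D, k', q, e, hk', he, hres⟩ := hH.exists_restrict hc
  obtain ⟨w, hw₁, hw₂⟩ := hF.exists_iso hres.isFPBC
  have hku : k ≫ w.hom ≫ q = h := by rw [reassoc_of% hw₁, hk']
  have hu : γ.left ≫ c = (w.hom ≫ q) ≫ β.right := by
    rw [← hw₂, Category.assoc, he, Category.assoc]
  have : Mono (w.hom ≫ q) := mono_of_mono_fac hu.symm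
  have hpb : IsPullback α.left k f ((w.hom ≫ q) ≫ β.left) := by
    rw [← hku] at hG
    exact hG.isPullback.of_comp_mono_snd
  exact ⟨hS.desc f _ hpb.w, hS.mono_desc hpb, hS.inl_desc _ _ _, w.hom ≫ q, hku,
    (hS.inr_desc _ _ _).symm, hu⟩

theorem IsSpanHomUnder.comatch_unique (hS : IsPushout α.left k dS γ.right)
    (hU : IsPushout α.right k i γ.left) (hG : IsFPBC α.left f h β.left) {n : S ⟶ G} [Mono n]
    (hn : dS ≫ n = f) {c c' : U ⟶ H} (hc : i ≫ c = i ≫ c') (h₁ : IsSpanHomUnder γ β k h n c)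
    (h₂ : IsSpanHomUnder γ β k h n c') : c = c' := by
  obtain ⟨u, hu₀, hu₁, hu₂⟩ := h₁
  obtain ⟨u', hu₀', hu₁', hu₂'⟩ := h₂
  obtain rfl : u = u' :=
    (hG.existsUnique_of_isPushout hS hn).unique ⟨hu₁, hu₀⟩ ⟨hu₁', hu₀'⟩
  exact hU.hom_ext hc (hu₂.trans hu₂'.symm)

theorem nonempty_mchsUnder_equiv (hS : IsPushout α.left k dS γ.right)
    (hF : IsFPBC α.right i k γ.left) (hU : IsPushout α.right k i γ.left)
    (hG : IsFPBC α.left f h β.left) (hH : IsPushout α.right h g β.right) [Mono f] :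
    Nonempty (MchsUnder dS f ≃ MchsUnder i g) :=
  Relator.nonempty_equiv_of_biTotal_of_biUnique (r := fun n c => IsSpanHomUnder γ β k h n.1 c.1)
    ⟨fun ⟨n, _, hn⟩ => by
      obtain ⟨c, hc, hci, hr⟩ := exists_isSpanHomUnder_of_match hS hU hG hH hn
      exact ⟨⟨c, hc, hci⟩, hr⟩,
    fun ⟨c, _, hc⟩ => by
      obtain ⟨n, hn, hnf, hr⟩ := exists_isSpanHomUnder_of_comatch hS hF hG hH hc
      exact ⟨⟨n, hn, hnf⟩, hr⟩⟩
    ⟨fun ⟨_, _, hn⟩ ⟨_, _, hn'⟩ _ h₁ h₂ =>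
      Subtype.ext (IsSpanHomUnder.match_unique hS (hn.trans hn'.symm) h₁ h₂),
    fun ⟨_, _, hn⟩ ⟨_, _, hc⟩ ⟨_, _, hc'⟩ h₁ h₂ =>
      Subtype.ext (IsSpanHomUnder.comatch_unique hS hU hG hn (hc.trans hc'.symm) h₁ h₂)⟩

end Derivation

def sigmaMchsUnderEquiv {L S : C} (d : L ⟶ S) [Mono d] (G : C) :
    (Σ f : Mchs L G, MchsUnder d f.1) ≃ Mchs S G where
  toFun p := ⟨p.2.1, p.2.2.1⟩
  invFun n := ⟨⟨d ≫ n.1, mono_comp' inferInstance n.2⟩, n.1, n.2, rfl⟩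
  left_inv p := Sigma.subtype_ext (Subtype.ext p.2.2.2) rfl
  right_inv _ := rfl

theorem card_mchs_eq_sum_card_mchsUnder [Adhesive C] {L R U S G : C} {α : Rule L R}
    {i : R ⟶ U} (hder : Derivable α i) {dS : L ⟶ S} [Mono dS] {γ : Rule U S}
    (hγ : IsDerivation α.rev i dS γ) [Fintype (Mchs L G)] {H : Mchs L G → C}
    (g : ∀ f, R ⟶ H f) (β : ∀ f, Rule G (H f)) (hβ : ∀ f, IsDerivation α f.1 (g f) (β f))
    (hfin : ∀ f, Finite (MchsUnder i (g f))) :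
    Nat.card (Mchs S G) = ∑ f, Nat.card (MchsUnder i (g f)) := by
  obtain ⟨k, -, hF, hS⟩ := hγ
  have e (f : Mchs L G) : Nonempty (MchsUnder dS f.1 ≃ MchsUnder i (g f)) := by
    obtain ⟨h, -, hG, hH⟩ := hβ f
    have := f.2
    exact nonempty_mchsUnder_equiv hS hF (hder.isPushout_of_isFPBC hF) hG hH
  have (f : Mchs L G) : Finite (MchsUnder dS f.1) :=
    have := hfin f
    .of_equiv _ (e f).some.symm
  rw [← Nat.card_congr (sigmaMchsUnderEquiv dS G), Nat.card_sigma]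
  exact Finset.sum_congr rfl fun f _ => Nat.card_congr (e f).some

open scoped Classical in
theorem production_term_general [Adhesive C]
    {L R F G : C} (α : Rule L R)
    {ι : Type} [Fintype ι] (M : ι → Gluing R F)
    (hmin : ∀ i, (M i).Minimal)
    (hrep : ∀ gl : Gluing R F, gl.Minimal → ∃! i : ι, GluingIso gl (M i))
    (S : ∀ i : ι, Derivable α (M i).i₁ → C)
    (d : ∀ (i : ι) (h : Derivable α (M i).i₁), L ⟶ S i h)
    (hd : ∀ (i : ι) (h : Derivable α (M i).i₁),
      Mono (d i h) ∧ ∃ γ : Rule (M i).U (S i h), IsDerivation α.rev (M i).i₁ (d i h) γ)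
    [Fintype (Mchs L G)]
    (Hf : Mchs L G → C)
    (af : ∀ f : Mchs L G, R ⟶ Hf f)
    (haf : ∀ f : Mchs L G, Mono (af f) ∧ ∃ β : Rule G (Hf f), IsDerivation α f.1 (af f) β)
    (hfin1 : ∀ f : Mchs L G, Finite (Mchs F (Hf f))) :
    ∑ f : Mchs L G, Nat.card (Mchs F (Hf f)) =
      ∑ i : ι, (if h : Derivable α (M i).i₁ then Nat.card (Mchs (S i h) G) else 0) := by
  choose hmono β hβ using haf
  have hfin (f : Mchs L G) (i : ι) : Finite (MchsUnder (M i).i₁ (af f)) :=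
    have := hmono f
    have := hfin1 f
    Gluing.finite_mchsUnder M (af f) hmin hrep i
  have hF (f : Mchs L G) :
      Nat.card (Mchs F (Hf f)) = ∑ i, Nat.card (MchsUnder (M i).i₁ (af f)) :=
    have := hmono f
    have := hfin1 f
    Gluing.card_mchs_eq_sum M (af f) hmin hrep
  have hS (i : ι) : (if h : Derivable α (M i).i₁ then Nat.card (Mchs (S i h) G) else 0) =
      ∑ f, Nat.card (MchsUnder (M i).i₁ (af f)) := by
    split_ifs with hder
    · obtain ⟨_, γ, hγ⟩ := hd i hder
      exact card_mchs_eq_sum_card_mchsUnder hder hγ af β hβ (hfin · i)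
    · refine (Finset.sum_eq_zero fun f _ => ?_).symm
      have : IsEmpty (MchsUnder (M i).i₁ (af f)) :=
        ⟨fun ⟨c, _, hc⟩ => hder ((hβ f).derivable_of_comp_mono hc)⟩
      exact Nat.card_of_isEmpty
  simp only [hF, hS]
  exact Finset.sum_comm

open scoped Classical in
/-- The production term of the rate matrix. -/
theorem production_term [Adhesive C]
    (hFPBC : ∀ {X Y Z : C} (f₁ : X ⟶ Y) (f₂ : Y ⟶ Z), Mono f₁ → Mono f₂ →
      ∃ (W : C) (g₁ : X ⟶ W) (g₂ : W ⟶ Z), IsFPBC f₁ f₂ g₁ g₂)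
    {L R F G : C} (α : Rule L R)
    {ι : Type} [Fintype ι] (M : ι → Gluing R F)
    (hmin : ∀ i, (M i).Minimal)
    (hrep : ∀ gl : Gluing R F, gl.Minimal → ∃! i : ι, GluingIso gl (M i))
    (S : ∀ i : ι, Derivable α (M i).i₁ → C)
    (d : ∀ (i : ι) (h : Derivable α (M i).i₁), L ⟶ S i h)
    (hd : ∀ (i : ι) (h : Derivable α (M i).i₁),
      Mono (d i h) ∧ ∃ γ : Rule (M i).U (S i h), IsDerivation α.rev (M i).i₁ (d i h) γ)
    [Fintype (Mchs L G)]
    (Hf : Mchs L G → C)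
    (af : ∀ f : Mchs L G, R ⟶ Hf f)
    (haf : ∀ f : Mchs L G, Mono (af f) ∧ ∃ β : Rule G (Hf f), IsDerivation α f.1 (af f) β)
    (hfin1 : ∀ f : Mchs L G, Finite (Mchs F (Hf f)))
    (hfin2 : ∀ (i : ι) (h : Derivable α (M i).i₁), Finite (Mchs (S i h) G)) :
    ∑ f : Mchs L G, Nat.card (Mchs F (Hf f)) =
      ∑ i : ι, (if h : Derivable α (M i).i₁ then Nat.card (Mchs (S i h) G) else 0) :=
  production_term_general α M hmin hrep S d hd Hf af haf hfin1
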